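/- arXiv:1705.11032 — 4 statements merged into one kernel-verified Lean document; each statement's English description precedes it below -/
import Mathlib

section
/- Let A, B be nonempty closed convex subsets of a real Hilbert space with T = (1/2)(I + R_B R_A). If x is a fixed point of T, then P_A x ∈ A ∩ B. -/
/-- If `x` is a fixed point of the Douglas–Rachford operator `T = (1/2)(I + R_B R_A)`
for nonempty closed convex sets `A`, `B`, then `P_A x ∈ A ∩ B`. -/
theorem douglas_rachford_fixed_point_shadow {H : Type*} [NormedAddCommGroup H]
    [InnerProductSpace ℝ H] [CompleteSpace H]
    (A B : Set H) (hA : A.Nonempty) (hAcl : IsClosed A) (hAconv : Convex ℝ A)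
    (hB : B.Nonempty) (hBcl : IsClosed B) (hBconv : Convex ℝ B)
    (PA PB : H → H)
    (hPA : ∀ x, PA x ∈ A ∧ ∀ z ∈ A, ‖x - PA x‖ ≤ ‖x - z‖)
    (hPB : ∀ x, PB x ∈ B ∧ ∀ z ∈ B, ‖x - PB x‖ ≤ ‖x - z‖)
    (RA RB : H → H) (hRA : ∀ x, RA x = (2 : ℝ) • PA x - x)
    (hRB : ∀ x, RB x = (2 : ℝ) • PB x - x)
    (T : H → H) (hT : ∀ x, T x = (1 / 2 : ℝ) • (x + RB (RA x)))
    (x : H) (hx : T x = x) :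
    PA x ∈ A ∩ B := by
  have h1 : RB (RA x) = x := by
    have h := hx
    rw [hT] at h
    linear_combination (norm := module) (2:ℝ) • h
  have h3 : PB (RA x) = PA x := by
    rw [hRB, hRA] at h1
    rw [hRA]
    linear_combination (norm := module) ((1:ℝ)/2) • h1
  exact ⟨(hPA x).1, h3 ▸ (hPB (RA x)).1⟩
end

section
/- Let A, B be nonempty closed convex subsets of a finite-dimensional real Hilbert space with A ∩ B ≠ ∅. For any starting point x₀, the Douglas–Rachford iterates x_{n+1} = (1/2)(x_n + R_B R_A x_n) converge in norm to a fixed point x of T with P_A x ∈ A ∩ B. -/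
open Filter RealInnerProductSpace

variable {E : Type*} [NormedAddCommGroup E] [InnerProductSpace ℝ E]

lemma aux_var {K : Set E} (hK : Convex ℝ K) (hKne : K.Nonempty) {P : E → E}
    (hP : ∀ x, P x ∈ K ∧ ∀ z ∈ K, ‖x - P x‖ ≤ ‖x - z‖) :
    ∀ u, ∀ z ∈ K, ⟪u - P u, z - P u⟫ ≤ (0 : ℝ) := by
  intro u z hz
  haveI : Nonempty K := hKne.to_subtype
  have hproj : ‖u - P u‖ = ⨅ w : K, ‖u - w‖ := by
    refine le_antisymm (le_ciInf fun w => (hP u).2 w w.2) ?_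
    have hbdd : BddBelow (Set.range fun w : K => ‖u - (w:E)‖) := by
      refine ⟨0, ?_⟩; rintro r ⟨w, rfl⟩; exact norm_nonneg _
    exact ciInf_le hbdd ⟨P u, (hP u).1⟩
  exact (norm_eq_iInf_iff_real_inner_le_zero hK (hP u).1).mp hproj z hz

lemma aux_firm {K : Set E} (hK : Convex ℝ K) (hKne : K.Nonempty) {P : E → E}
    (hP : ∀ x, P x ∈ K ∧ ∀ z ∈ K, ‖x - P x‖ ≤ ‖x - z‖) (u v : E) :
    ‖P u - P v‖ ^ 2 ≤ ⟪u - v, P u - P v⟫ := by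
  have h1 := aux_var hK hKne hP u (P v) (hP v).1
  have h2 := aux_var hK hKne hP v (P u) (hP u).1
  have e1 : ⟪u - P u, P v - P u⟫ = -⟪u - P u, P u - P v⟫ := by
    rw [← inner_neg_right]; congr 1; abel
  rw [e1] at h1
  have h3 : (0:ℝ) ≤ ⟪u - P u, P u - P v⟫ := by linarith
  have expand : ⟪u - v, P u - P v⟫
      = ⟪u - P u, P u - P v⟫ - ⟪v - P v, P u - P v⟫
        + ⟪P u - P v, P u - P v⟫ := by
    rw [← inner_sub_left, ← inner_add_left]; congr 1; abel
  rw [expand, ← real_inner_self_eq_norm_sq]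
  linarith

lemma aux_refl_nonexp {K : Set E} (hK : Convex ℝ K) (hKne : K.Nonempty) {P R : E → E}
    (hP : ∀ x, P x ∈ K ∧ ∀ z ∈ K, ‖x - P x‖ ≤ ‖x - z‖)
    (hR : ∀ x, R x = (2:ℝ) • P x - x) (u v : E) :
    ‖R u - R v‖ ≤ ‖u - v‖ := by
  have hfirm := aux_firm hK hKne hP u v
  have hRuv : R u - R v = (2:ℝ) • (P u - P v) - (u - v) := by
    rw [hR, hR]; module
  have hsq : ‖R u - R v‖ ^ 2 ≤ ‖u - v‖ ^ 2 := by
    rw [hRuv, norm_sub_sq_real, norm_smul, real_inner_smul_left]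
    have hcomm : ⟪u - v, P u - P v⟫ = ⟪P u - P v, u - v⟫ := real_inner_comm _ _
    have habs : |(2:ℝ)| = 2 := by norm_num
    simp only [Real.norm_eq_abs, habs]
    nlinarith [norm_nonneg (P u - P v), norm_nonneg (u - v)]
  nlinarith [norm_nonneg (R u - R v), norm_nonneg (u - v)]


/-- In `ℝ^d`, for nonempty closed convex `A`, `B` with `A ∩ B ≠ ∅`, the
Douglas–Rachford iterates from any starting point converge in norm to a fixed
point `p` of `T = (1/2)(I + R_B R_A)` with `P_A p ∈ A ∩ B`. -/
theorem douglas_rachford_convergence {d : ℕ}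
    (A B : Set (EuclideanSpace ℝ (Fin d)))
    (hA : A.Nonempty) (hAcl : IsClosed A) (hAconv : Convex ℝ A)
    (hB : B.Nonempty) (hBcl : IsClosed B) (hBconv : Convex ℝ B)
    (hAB : (A ∩ B).Nonempty)
    (PA PB : EuclideanSpace ℝ (Fin d) → EuclideanSpace ℝ (Fin d))
    (hPA : ∀ x, PA x ∈ A ∧ ∀ z ∈ A, ‖x - PA x‖ ≤ ‖x - z‖)
    (hPB : ∀ x, PB x ∈ B ∧ ∀ z ∈ B, ‖x - PB x‖ ≤ ‖x - z‖)
    (RA RB : EuclideanSpace ℝ (Fin d) → EuclideanSpace ℝ (Fin d))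
    (hRA : ∀ x, RA x = (2 : ℝ) • PA x - x)
    (hRB : ∀ x, RB x = (2 : ℝ) • PB x - x)
    (T : EuclideanSpace ℝ (Fin d) → EuclideanSpace ℝ (Fin d))
    (hT : ∀ x, T x = (1 / 2 : ℝ) • (x + RB (RA x)))
    (x : ℕ → EuclideanSpace ℝ (Fin d)) (hx : ∀ n, x (n + 1) = T (x n)) :
    ∃ p, Filter.Tendsto x Filter.atTop (nhds p) ∧ T p = p ∧ PA p ∈ A ∩ B := by
  -- nonexpansiveness of the reflections and of N = RB ∘ RA
  have hRAnon := aux_refl_nonexp hAconv hA hPA hRA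
  have hRBnon := aux_refl_nonexp hBconv hB hPB hRB
  have hNnon : ∀ u v, ‖RB (RA u) - RB (RA v)‖ ≤ ‖u - v‖ :=
    fun u v => (hRBnon _ _).trans (hRAnon u v)
  -- T is nonexpansive, hence continuous
  have hTsub : ∀ u v, T u - T v = (1/2 : ℝ) • ((u - v) + (RB (RA u) - RB (RA v))) := by
    intro u v; rw [hT, hT]; module
  have hTnon : ∀ u v, ‖T u - T v‖ ≤ ‖u - v‖ := by
    intro u v
    rw [hTsub, norm_smul]
    have := norm_add_le (u - v) (RB (RA u) - RB (RA v))
    have h2 := hNnon u v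
    simp only [Real.norm_eq_abs]
    rw [show |(1/2 : ℝ)| = 1/2 by norm_num]
    linarith
  have hTcont : Continuous T := by
    refine (LipschitzWith.of_dist_le_mul (K := 1) fun u v => ?_).continuous
    simpa [dist_eq_norm] using hTnon u v
  -- fixed points z of T satisfy RB (RA z) = z
  have hNfix : ∀ z, T z = z → RB (RA z) = z := by
    intro z hz
    have h2 : (2:ℝ) • T z = z + RB (RA z) := by
      rw [hT, smul_smul]; norm_num
    rw [hz] at h2
    have : RB (RA z) = (2:ℝ) • z - z := by rw [h2]; abel
    rw [this]; module
  -- the Fejér inequality with respect to any fixed point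
  have hkey : ∀ z, T z = z → ∀ u,
      ‖T u - z‖ ^ 2 + ‖T u - u‖ ^ 2 ≤ ‖u - z‖ ^ 2 := by
    intro z hz u
    have hNz := hNfix z hz
    have hb : ‖RB (RA u) - z‖ ≤ ‖u - z‖ := by
      have := hNnon u z; rwa [hNz] at this
    have h1 : T u - z = (1/2 : ℝ) • ((u - z) + (RB (RA u) - z)) := by
      rw [hT]; module
    have h2 : T u - u = (1/2 : ℝ) • ((RB (RA u) - z) - (u - z)) := by
      rw [hT]; module
    have hpar := parallelogram_law_with_norm ℝ (u - z) (RB (RA u) - z)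
    rw [h1, h2, norm_smul, norm_smul]
    rw [norm_sub_rev]
    simp only [Real.norm_eq_abs, show |(1/2 : ℝ)| = 1/2 by norm_num]
    nlinarith [norm_nonneg (u - z), norm_nonneg (RB (RA u) - z)]
  -- a point of A ∩ B is a fixed point
  obtain ⟨y, hyA, hyB⟩ := hAB
  have hPAy : PA y = y := by
    have h := (hPA y).2 y hyA
    simp only [sub_self, norm_zero] at h
    exact (sub_eq_zero.mp (norm_le_zero_iff.mp h)).symm
  have hPBy : PB y = y := by
    have h := (hPB y).2 y hyB
    simp only [sub_self, norm_zero] at h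
    exact (sub_eq_zero.mp (norm_le_zero_iff.mp h)).symm
  have hRAy : RA y = y := by rw [hRA, hPAy]; module
  have hRBy : RB y = y := by rw [hRB, hPBy]; module
  have hTy : T y = y := by rw [hT, hRAy, hRBy]; module
  -- step inequality along the orbit
  have hstep : ∀ z, T z = z → ∀ n,
      ‖x (n+1) - z‖ ^ 2 + ‖x (n+1) - x n‖ ^ 2 ≤ ‖x n - z‖ ^ 2 := by
    intro z hz n; rw [hx]; exact hkey z hz (x n)
  have hanti : ∀ z, T z = z → Antitone fun n => ‖x n - z‖ := by
    intro z hz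
    refine antitone_nat_of_succ_le fun n => ?_
    have h := hstep z hz n
    nlinarith [norm_nonneg (x (n+1) - z), norm_nonneg (x n - z),
      norm_nonneg (x (n+1) - x n)]
  -- distances to y converge; successive differences tend to 0
  have hbddb : BddBelow (Set.range fun n => ‖x n - y‖) := by
    refine ⟨0, ?_⟩; rintro r ⟨n, rfl⟩; exact norm_nonneg _
  have hL : Filter.Tendsto (fun n => ‖x n - y‖) Filter.atTop
      (nhds (⨅ n, ‖x n - y‖)) := tendsto_atTop_ciInf (hanti y hTy) hbddb
  set L := ⨅ n, ‖x n - y‖ with hLdef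
  have hL2 : Filter.Tendsto (fun n => ‖x n - y‖ ^ 2) Filter.atTop (nhds (L ^ 2)) :=
    hL.pow 2
  have hL2' : Filter.Tendsto (fun n => ‖x (n+1) - y‖ ^ 2) Filter.atTop (nhds (L ^ 2)) :=
    hL2.comp (Filter.tendsto_add_atTop_nat 1)
  have hdiff2 : Filter.Tendsto (fun n => ‖x (n+1) - x n‖ ^ 2) Filter.atTop (nhds 0) := by
    have hub : ∀ n, ‖x (n+1) - x n‖ ^ 2 ≤ ‖x n - y‖ ^ 2 - ‖x (n+1) - y‖ ^ 2 := by
      intro n; have := hstep y hTy n; linarith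
    have hlb : ∀ n, 0 ≤ ‖x (n+1) - x n‖ ^ 2 := fun n => sq_nonneg _
    have hg : Filter.Tendsto (fun n => ‖x n - y‖ ^ 2 - ‖x (n+1) - y‖ ^ 2)
        Filter.atTop (nhds 0) := by
      have := hL2.sub hL2'; simpa using this
    exact squeeze_zero hlb hub hg
  have hdiff : Filter.Tendsto (fun n => x (n+1) - x n) Filter.atTop (nhds 0) := by
    rw [tendsto_zero_iff_norm_tendsto_zero]
    have := (Real.continuous_sqrt.tendsto 0).comp hdiff2
    simp only [Function.comp_def, Real.sqrt_zero] at this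
    convert this using 2 with n
    rw [Real.sqrt_sq (norm_nonneg _)]
  -- boundedness and a convergent subsequence
  have hbound : ∀ n, x n ∈ Metric.closedBall (0 : EuclideanSpace ℝ (Fin d))
      (‖x 0 - y‖ + ‖y‖) := by
    intro n
    rw [Metric.mem_closedBall, dist_zero_right]
    calc ‖x n‖ = ‖(x n - y) + y‖ := by rw [sub_add_cancel]
      _ ≤ ‖x n - y‖ + ‖y‖ := norm_add_le _ _
      _ ≤ ‖x 0 - y‖ + ‖y‖ := by
          have := hanti y hTy (Nat.zero_le n); linarith
  obtain ⟨p, -, φ, hφmono, hφtendsto⟩ :=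
    tendsto_subseq_of_bounded (Metric.isBounded_closedBall) hbound
  -- p is a fixed point of T
  have hTp : T p = p := by
    have h1 : Filter.Tendsto (fun k => T (x (φ k))) Filter.atTop (nhds (T p)) :=
      (hTcont.tendsto p).comp hφtendsto
    have h2 : Filter.Tendsto (fun k => x (φ k + 1) - x (φ k)) Filter.atTop (nhds 0) :=
      hdiff.comp hφmono.tendsto_atTop
    have h3 : Filter.Tendsto (fun k => x (φ k + 1)) Filter.atTop (nhds p) := by
      have := hφtendsto.add h2
      simpa [Function.comp_def] using this
    have h4 : (fun k => x (φ k + 1)) = fun k => T (x (φ k)) := by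
      funext k; exact hx (φ k)
    rw [h4] at h3
    exact tendsto_nhds_unique h1 h3
  -- convergence of the full sequence to p
  have htend : Filter.Tendsto x Filter.atTop (nhds p) := by
    have hbddp : BddBelow (Set.range fun n => ‖x n - p‖) := by
      refine ⟨0, ?_⟩; rintro r ⟨n, rfl⟩; exact norm_nonneg _
    have hLp : Filter.Tendsto (fun n => ‖x n - p‖) Filter.atTop
        (nhds (⨅ n, ‖x n - p‖)) := tendsto_atTop_ciInf (hanti p hTp) hbddp
    have hsub : Filter.Tendsto (fun k => ‖x (φ k) - p‖) Filter.atTop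
        (nhds (⨅ n, ‖x n - p‖)) := hLp.comp hφmono.tendsto_atTop
    have hsub0 : Filter.Tendsto (fun k => ‖x (φ k) - p‖) Filter.atTop (nhds 0) := by
      have := hφtendsto.sub_const p
      rw [sub_self] at this
      exact (tendsto_zero_iff_norm_tendsto_zero.mp this)
    have hIzero : (⨅ n, ‖x n - p‖) = 0 := tendsto_nhds_unique hsub hsub0
    rw [hIzero] at hLp
    have : Filter.Tendsto (fun n => x n - p) Filter.atTop (nhds 0) :=
      tendsto_zero_iff_norm_tendsto_zero.mpr hLp
    have := this.add_const p
    simpa using this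
  -- P_A p lies in A ∩ B
  have hNp : RB (RA p) = p := hNfix p hTp
  have hPBRA : PB (RA p) = PA p := by
    rw [hRB] at hNp
    have h4 : (2:ℝ) • PB (RA p) = p + RA p := sub_eq_iff_eq_add.mp hNp
    have h5 : (2:ℝ) • PB (RA p) = (2:ℝ) • PA p := by rw [h4, hRA]; module
    have h2ne : (2:ℝ) ≠ 0 := two_ne_zero
    exact smul_right_injective _ h2ne h5
  refine ⟨p, htend, hTp, (hPA p).1, ?_⟩
  rw [← hPBRA]
  exact (hPB (RA p)).1
end

section
/- For any c > 0, the function y(x) = log(c − c·tanh²((√2/2)·√c·(1/2 − x))) satisfies y'' = −exp(y) on ℝ, and satisfies y(0) = y(1) = 0 if and only if c − c·tanh²(√c/(2√2)) = 1. -/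
lemma tanh_sq_lemma (t : ℝ) : 1 - Real.tanh t ^ 2 = 1 / Real.cosh t ^ 2 := by
  have h := Real.cosh_pos t
  have h2 := Real.cosh_sq_sub_sinh_sq t
  rw [Real.tanh_eq_sinh_div_cosh, div_pow]
  field_simp
  linarith

lemma hasDerivAt_tanh (t : ℝ) : HasDerivAt Real.tanh (1 / Real.cosh t ^ 2) t := by
  have h := (Real.hasDerivAt_sinh t).div (Real.hasDerivAt_cosh t) (Real.cosh_pos t).ne'
  have heq : (Real.sinh / Real.cosh) = Real.tanh :=
    funext fun x => (Real.tanh_eq_sinh_div_cosh x).symm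
  rw [heq] at h
  refine h.congr_deriv ?_
  have h2 := Real.cosh_sq_sub_sinh_sq t
  have h3 := (Real.cosh_pos t).ne'
  field_simp
  nlinarith

/-- For `c > 0`, `y(x) = log(c − c tanh²((√2/2)√c(1/2 − x)))` solves `y'' = −eʸ` on
`ℝ`, and satisfies `y(0) = y(1) = 0` iff `c − c tanh²(√c/(2√2)) = 1`. -/
theorem example_exp_solution (c : ℝ) (hc : 0 < c) (y : ℝ → ℝ)
    (hy : ∀ x, y x = Real.log
      (c - c * Real.tanh (Real.sqrt 2 / 2 * Real.sqrt c * (1 / 2 - x)) ^ 2)) :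
    (∀ x : ℝ, deriv (deriv y) x = -Real.exp (y x)) ∧
      ((y 0 = 0 ∧ y 1 = 0) ↔
        c - c * Real.tanh (Real.sqrt c / (2 * Real.sqrt 2)) ^ 2 = 1) := by
  set a : ℝ := Real.sqrt 2 / 2 * Real.sqrt c with ha
  have hsq2 : Real.sqrt 2 * Real.sqrt 2 = 2 := Real.mul_self_sqrt (by norm_num)
  have hsqc : Real.sqrt c * Real.sqrt c = c := Real.mul_self_sqrt hc.le
  have ha2 : 2 * (a * a) = c := by
    rw [ha]; nlinarith [hsq2, hsqc]
  have hveq : ∀ t : ℝ, c - c * Real.tanh t ^ 2 = c / Real.cosh t ^ 2 := by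
    intro t
    have : c - c * Real.tanh t ^ 2 = c * (1 - Real.tanh t ^ 2) := by ring
    rw [this, tanh_sq_lemma, mul_one_div]
  have hvpos : ∀ t : ℝ, 0 < c / Real.cosh t ^ 2 := fun t =>
    div_pos hc (pow_pos (Real.cosh_pos t) 2)
  have hey : ∀ x : ℝ, Real.exp (y x) = c / Real.cosh (a * (1 / 2 - x)) ^ 2 := by
    intro x
    rw [hy x, hveq, Real.exp_log (hvpos _)]
  have hyg : ∀ x : ℝ, y x = Real.log c - 2 * Real.log (Real.cosh (a * (1 / 2 - x))) := by
    intro x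
    rw [hy x, hveq, Real.log_div hc.ne' (pow_pos (Real.cosh_pos _) 2).ne', Real.log_pow]
    push_cast
    ring
  have hu : ∀ x : ℝ, HasDerivAt (fun x : ℝ => a * (1 / 2 - x)) (-a) x := by
    intro x
    have h := ((hasDerivAt_id x).const_sub (1 / 2 : ℝ)).const_mul a
    simpa using h
  have hcosh : ∀ x : ℝ, HasDerivAt (fun x : ℝ => Real.cosh (a * (1 / 2 - x)))
      (Real.sinh (a * (1 / 2 - x)) * (-a)) x := fun x =>
    (Real.hasDerivAt_cosh _).comp x (hu x)
  have hy1 : ∀ x : ℝ, HasDerivAt y (2 * a * Real.tanh (a * (1 / 2 - x))) x := by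
    intro x
    have h := ((hcosh x).log (Real.cosh_pos _).ne').const_mul (2 : ℝ)
    have h2 := (hasDerivAt_const x (Real.log c)).sub h
    have h3 : HasDerivAt (fun x : ℝ => Real.log c - 2 * Real.log (Real.cosh (a * (1 / 2 - x))))
        (2 * a * Real.tanh (a * (1 / 2 - x))) x := by
      refine h2.congr_deriv ?_
      rw [Real.tanh_eq_sinh_div_cosh]
      ring
    exact h3.congr_of_eventuallyEq (Filter.Eventually.of_forall fun t => (hyg t))
  have hdy : deriv y = fun x => 2 * a * Real.tanh (a * (1 / 2 - x)) :=
    funext fun x => (hy1 x).deriv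
  constructor
  · intro x
    have h := ((hasDerivAt_tanh (a * (1 / 2 - x))).comp x (hu x)).const_mul (2 * a)
    have h2 : HasDerivAt (fun x => 2 * a * Real.tanh (a * (1 / 2 - x)))
        (-(c / Real.cosh (a * (1 / 2 - x)) ^ 2)) x := by
      refine h.congr_deriv ?_
      rw [← ha2]
      ring
    rw [hdy, h2.deriv, hey x]
  · have key : Real.sqrt c / (2 * Real.sqrt 2) = a * (1 / 2) := by
      rw [ha]
      have h2 : (2 : ℝ) * Real.sqrt 2 ≠ 0 := by positivity
      field_simp
      nlinarith [hsq2, Real.sqrt_nonneg c]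
    have h0 : y 0 = Real.log (c - c * Real.tanh (a * (1 / 2)) ^ 2) := by
      rw [hy 0]; norm_num
    have h1 : y 1 = Real.log (c - c * Real.tanh (a * (1 / 2)) ^ 2) := by
      rw [hy 1]
      have : a * (1 / 2 - 1) = -(a * (1 / 2)) := by ring
      rw [this, Real.tanh_neg]
      ring_nf
    rw [key, h0, h1]
    have hvp : 0 < c - c * Real.tanh (a * (1 / 2)) ^ 2 := by
      rw [hveq]; exact hvpos _
    constructor
    · rintro ⟨hl, -⟩
      rw [← Real.exp_log hvp, hl, Real.exp_zero]
    · intro h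
      rw [h, Real.log_one]
      exact ⟨rfl, rfl⟩
end

section
/- The scalar equation c·sech²(√c/(2√2)) = 1 has at least two solutions in (0, ∞): one in the interval (1, 2) and one in the interval (59, 60). -/
private lemma cosh_sq_exp (x : ℝ) :
    Real.cosh x ^ 2 = (Real.exp (2 * x) + 2 + Real.exp (-(2 * x))) / 4 := by
  rw [Real.cosh_eq, Real.exp_neg, Real.exp_neg, two_mul, Real.exp_add]
  have h := Real.exp_ne_zero x
  field_simp
  ring

private lemma exp_le_inv_one_sub {x : ℝ} (hx : x < 1) : Real.exp x ≤ (1 - x)⁻¹ := by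
  have h1 : 1 - x ≤ Real.exp (-x) := by
    have := Real.add_one_le_exp (-x); linarith
  have h2 : 0 < 1 - x := by linarith
  rw [Real.exp_neg] at h1
  rw [le_inv_comm₀ (Real.exp_pos x) h2]
  exact h1

private lemma exp5_lb : (148.41315 : ℝ) < Real.exp 1 ^ 5 := by
  have h := Real.exp_one_gt_d9
  calc (148.41315 : ℝ) < 2.7182818283 ^ 5 := by norm_num
    _ < Real.exp 1 ^ 5 := by
        apply pow_lt_pow_left₀ h (by norm_num) (by norm_num)

private lemma exp5_ub : Real.exp 1 ^ 5 < (148.41316 : ℝ) := by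
  have h := Real.exp_one_lt_d9
  calc Real.exp 1 ^ 5 < 2.7182818286 ^ 5 := by
        apply pow_lt_pow_left₀ h (Real.exp_pos 1).le (by norm_num)
    _ < 148.41316 := by norm_num

private lemma exp_sqrt295_lt : Real.exp (Real.sqrt 29.5) < 233 := by
  have h1 : Real.sqrt 29.5 < 5.44 := by
    rw [Real.sqrt_lt' (by norm_num)]; norm_num
  have h2 : Real.exp (Real.sqrt 29.5) < Real.exp 5.44 := Real.exp_lt_exp.mpr h1
  have h3 : Real.exp (5.44 : ℝ) = Real.exp 1 ^ 5 * Real.exp 0.44 := by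
    rw [← Real.exp_nat_mul, ← Real.exp_add]; norm_num
  have h4 : Real.exp (0.44 : ℝ) = Real.exp (11 / 400) ^ 16 := by
    rw [← Real.exp_nat_mul]; norm_num
  have h5 : Real.exp ((11 : ℝ) / 400) ≤ 400 / 389 := by
    have := exp_le_inv_one_sub (show (11 : ℝ) / 400 < 1 by norm_num)
    calc Real.exp ((11 : ℝ) / 400) ≤ (1 - 11 / 400)⁻¹ := this
      _ = 400 / 389 := by norm_num
  have h6 : Real.exp (0.44 : ℝ) ≤ (400 / 389 : ℝ) ^ 16 := by
    rw [h4]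
    exact pow_le_pow_left₀ (Real.exp_pos _).le h5 16
  have h7 : ((400 : ℝ) / 389) ^ 16 < 1.563 := by norm_num
  have h8 : Real.exp (5.44 : ℝ) < 148.41316 * 1.563 := by
    rw [h3]
    have := Real.exp_pos (0.44 : ℝ)
    calc Real.exp 1 ^ 5 * Real.exp 0.44 < 148.41316 * Real.exp 0.44 := by
          apply mul_lt_mul_of_pos_right exp5_ub this
      _ ≤ 148.41316 * 1.563 := by nlinarith [h6.trans_lt h7]
  calc Real.exp (Real.sqrt 29.5) < Real.exp 5.44 := h2
    _ < 148.41316 * 1.563 := h8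
    _ < 233 := by norm_num

private lemma exp_sqrt30_gt : (238 : ℝ) < Real.exp (Real.sqrt 30) := by
  have h1 : (5.4772 : ℝ) < Real.sqrt 30 := by
    rw [Real.lt_sqrt (by norm_num)]; norm_num
  have h2 : Real.exp 5.4772 < Real.exp (Real.sqrt 30) := Real.exp_lt_exp.mpr h1
  have h3 : Real.exp (5.4772 : ℝ) = Real.exp 1 ^ 5 * Real.exp 0.4772 := by
    rw [← Real.exp_nat_mul, ← Real.exp_add]; norm_num
  have h4 : Real.exp (0.4772 : ℝ) = Real.exp (1193 / 640000) ^ 256 := by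
    rw [← Real.exp_nat_mul]; norm_num
  have h5 : (1 + (1193 : ℝ) / 640000) ≤ Real.exp (1193 / 640000) := by
    have := Real.add_one_le_exp ((1193 : ℝ) / 640000); linarith
  have h6 : ((1 + (1193 : ℝ) / 640000)) ^ 256 ≤ Real.exp (0.4772 : ℝ) := by
    rw [h4]
    exact pow_le_pow_left₀ (by norm_num) h5 256
  have h7 : (1.604 : ℝ) < (1 + (1193 : ℝ) / 640000) ^ 256 := by norm_num
  have h8 : (148.41315 : ℝ) * 1.604 < Real.exp (5.4772 : ℝ) := by
    rw [h3]
    nlinarith [exp5_lb, h7.trans_le h6, Real.exp_pos (0.4772 : ℝ)]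
  calc (238 : ℝ) < 148.41315 * 1.604 := by norm_num
    _ < Real.exp 5.4772 := h8
    _ < Real.exp (Real.sqrt 30) := h2

/-- The equation `c · sech²(√c/(2√2)) = 1` has a solution in `(1,2)` and a solution
in `(59,60)`. -/
theorem sech_equation_two_solutions :
    (∃ c ∈ Set.Ioo (1 : ℝ) 2,
        c * (1 / Real.cosh (Real.sqrt c / (2 * Real.sqrt 2))) ^ 2 = 1) ∧
      (∃ c ∈ Set.Ioo (59 : ℝ) 60,
        c * (1 / Real.cosh (Real.sqrt c / (2 * Real.sqrt 2))) ^ 2 = 1) := by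
  set f : ℝ → ℝ := fun c => c * (1 / Real.cosh (Real.sqrt c / (2 * Real.sqrt 2))) ^ 2 with hf
  have hcosh : ∀ x : ℝ, Real.cosh x ≠ 0 := fun x => (Real.cosh_pos x).ne'
  have hcont : Continuous f := by
    apply continuous_id.mul
    apply Continuous.pow
    exact Continuous.div continuous_const
      (Real.continuous_cosh.comp (Real.continuous_sqrt.div_const _))
      (fun x => hcosh _)
  have hs2 : (0 : ℝ) < Real.sqrt 2 := Real.sqrt_pos.mpr (by norm_num)
  -- general form: f c = c / cosh(...)^2
  have hform : ∀ c : ℝ, f c = c / Real.cosh (Real.sqrt c / (2 * Real.sqrt 2)) ^ 2 := by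
    intro c
    simp only [hf, div_eq_mul_inv]
    rw [mul_pow]
    ring
  -- double of the argument equals sqrt (c/2)
  have hdouble : ∀ c : ℝ, 0 ≤ c →
      2 * (Real.sqrt c / (2 * Real.sqrt 2)) = Real.sqrt (c / 2) := by
    intro c hc
    rw [Real.sqrt_div hc]
    field_simp
  -- f 1 < 1
  have hf1 : f 1 < 1 := by
    rw [hform, div_lt_one (by positivity)]
    have h0 : Real.sqrt 1 / (2 * Real.sqrt 2) ≠ 0 := by
      rw [Real.sqrt_one]; positivity
    have h1 := Real.one_lt_cosh.mpr h0
    nlinarith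
  -- f 2 > 1 : cosh(1/2)^2 < 2
  have harg2 : Real.sqrt 2 / (2 * Real.sqrt 2) = 1 / 2 := by
    field_simp
  have hf2 : 1 < f 2 := by
    rw [hform, lt_div_iff₀ (by positivity), harg2, one_mul]
    rw [cosh_sq_exp]
    have h1 : Real.exp (2 * (1 / 2 : ℝ)) = Real.exp 1 := by norm_num
    have h2 : Real.exp (-(2 * (1 / 2 : ℝ))) ≤ 1 := by
      rw [Real.exp_le_one_iff]; norm_num
    rw [h1] at *
    have := Real.exp_one_lt_d9
    have h2' : Real.exp (-(2 * (1 / 2 : ℝ))) ≤ 1 := h2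
    linarith
  -- f 59 > 1 : cosh(√59/(2√2))^2 < 59
  have hf59 : 1 < f 59 := by
    rw [hform, lt_div_iff₀ (by positivity), one_mul, cosh_sq_exp,
      hdouble 59 (by norm_num)]
    have h295 : (59 : ℝ) / 2 = 29.5 := by norm_num
    rw [h295]
    have h1 := exp_sqrt295_lt
    have h2 : Real.exp (-Real.sqrt 29.5) ≤ 1 := by
      rw [Real.exp_le_one_iff]
      simp [Real.sqrt_nonneg]
    linarith
  -- f 60 < 1 : cosh(√60/(2√2))^2 > 60
  have hf60 : f 60 < 1 := by
    rw [hform, div_lt_one (by positivity), cosh_sq_exp, hdouble 60 (by norm_num)]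
    have h30 : (60 : ℝ) / 2 = 30 := by norm_num
    rw [h30]
    have h1 := exp_sqrt30_gt
    have h2 : 0 < Real.exp (-Real.sqrt 30) := Real.exp_pos _
    linarith
  constructor
  · have := intermediate_value_Ioo (by norm_num : (1:ℝ) ≤ 2) hcont.continuousOn
    obtain ⟨c, hc, hfc⟩ := this ⟨hf1, hf2⟩
    exact ⟨c, hc, hfc⟩
  · have := intermediate_value_Ioo' (by norm_num : (59:ℝ) ≤ 60) hcont.continuousOn
    obtain ⟨c, hc, hfc⟩ := this ⟨hf60, hf59⟩
    exact ⟨c, hc, hfc⟩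
end
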